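/- For 0 < ν ≤ 2−√3 and L ≥ 4ν, the polynomial q(ν,L) := L⁴ + 2L³(1−4ν+ν²) + 15L²(1−ν)²ν − 2L(1−ν)⁴(1+4ν+ν²) − (1−ν)⁶(1+ν)² is convex in L; moreover q(ν,0) < 0, ∂_L q(ν,0) < 0, and q(ν,(1+ν)²) = 27ν(1−ν)²(1+ν)⁴ > 0 for 0 < ν < 1. -/

import Mathlib

/-! For `ν ≤ 2 - √3` the cubic coefficient `2 (1 - 4ν + ν²) = 2 (2 - √3 - ν)(2 + √3 - ν)`
of the monic quartic `q(ν, ·)` is nonnegative, as is its quadratic coefficient `15 ν (1 - ν)²`;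
a monic quartic with nonnegative cubic and quadratic coefficients is a nonnegative combination of
convex powers plus an affine function on `[0, ∞)`, which contains `[4ν, ∞)`. The remaining claims
are evaluations of `q` and `∂_L q` at `L = 0` and `L = (1 + ν)²`. -/

noncomputable def q (v L : ℝ) : ℝ :=
  L^4 + 2*L^3*(1 - 4*v + v^2) + 15*L^2*(1 - v)^2*v
    - 2*L*(1 - v)^4*(1 + 4*v + v^2) - (1 - v)^6*(1 + v)^2

theorem convexOn_Ici_zero_quartic {a b : ℝ} (ha : 0 ≤ a) (hb : 0 ≤ b) (c d : ℝ) :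
    ConvexOn ℝ (Set.Ici 0) (fun x : ℝ => x ^ 4 + a * x ^ 3 + b * x ^ 2 + c * x + d) := by
  have hpowers := (convexOn_pow 4).add (((convexOn_pow 3).smul ha).add ((convexOn_pow 2).smul hb))
  have haff : ConvexOn ℝ (Set.Ici (0 : ℝ)) (fun x : ℝ => c * x + d) :=
    ((c • LinearMap.id : ℝ →ₗ[ℝ] ℝ).convexOn (convex_Ici 0)).add_const d
  refine (hpowers.add haff).congr fun x _ => ?_
  simp only [Pi.add_apply, smul_eq_mul]
  ring

theorem one_sub_four_mul_add_sq_nonneg {v : ℝ} (hv : v ≤ 2 - Real.sqrt 3) :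
    0 ≤ 1 - 4 * v + v ^ 2 := by
  have h3 : Real.sqrt 3 ^ 2 = 3 := Real.sq_sqrt (by norm_num)
  have hfactor : 1 - 4 * v + v ^ 2 = (2 - Real.sqrt 3 - v) * (2 + Real.sqrt 3 - v) := by
    linear_combination h3
  rw [hfactor]
  exact mul_nonneg (by linarith) (by linarith [Real.sqrt_nonneg 3])

theorem convexOn_Ici_zero_q {v : ℝ} (hv0 : 0 ≤ v) (hv : v ≤ 2 - Real.sqrt 3) :
    ConvexOn ℝ (Set.Ici 0) (q v) := by
  have hcubic : 0 ≤ 2 * (1 - 4 * v + v ^ 2) :=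
    mul_nonneg zero_le_two (one_sub_four_mul_add_sq_nonneg hv)
  have hquadratic : 0 ≤ 15 * (1 - v) ^ 2 * v := by positivity
  refine (convexOn_Ici_zero_quartic hcubic hquadratic (-2 * (1 - v) ^ 4 * (1 + 4 * v + v ^ 2))
    (-((1 - v) ^ 6 * (1 + v) ^ 2))).congr fun L _ => ?_
  unfold q
  ring

theorem hasDerivAt_q (v L : ℝ) :
    HasDerivAt (q v) (4 * L ^ 3 + 6 * L ^ 2 * (1 - 4 * v + v ^ 2) + 30 * L * (1 - v) ^ 2 * v
      - 2 * (1 - v) ^ 4 * (1 + 4 * v + v ^ 2)) L := by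
  have h := (((((hasDerivAt_pow 4 L).add
    (((hasDerivAt_pow 3 L).const_mul 2).mul_const (1 - 4 * v + v ^ 2))).add
    ((((hasDerivAt_pow 2 L).const_mul 15).mul_const ((1 - v) ^ 2)).mul_const v)).sub
    ((((hasDerivAt_id L).const_mul 2).mul_const ((1 - v) ^ 4)).mul_const
      (1 + 4 * v + v ^ 2))).sub_const ((1 - v) ^ 6 * (1 + v) ^ 2))
  refine h.congr_deriv ?_
  norm_num
  ring

theorem q_zero (v : ℝ) : q v 0 = -((1 - v) ^ 6 * (1 + v) ^ 2) := by
  simp [q]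

theorem q_one_add_sq (v : ℝ) : q v ((1 + v) ^ 2) = 27 * v * (1 - v) ^ 2 * (1 + v) ^ 4 := by
  unfold q
  ring

theorem stmt19 :
    (∀ v : ℝ, 0 < v → v ≤ 2 - Real.sqrt 3 →
      ConvexOn ℝ (Set.Ici (4*v)) (fun L => q v L)) ∧
    (∀ v : ℝ, 0 < v → v < 1 →
      q v 0 < 0 ∧ deriv (fun L => q v L) 0 < 0 ∧
      q v ((1 + v)^2) = 27*v*(1 - v)^2*(1 + v)^4 ∧
      0 < q v ((1 + v)^2)) := by
  refine ⟨fun v hv hv' => ?_, fun v hv hv1 => ?_⟩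
  · exact (convexOn_Ici_zero_q hv.le hv').subset (Set.Ici_subset_Ici.mpr (by linarith))
      (convex_Ici _)
  have h1 : 0 < 1 - v := by linarith
  have h2 : 0 < 1 + 4 * v + v ^ 2 := by nlinarith
  refine ⟨?_, ?_, q_one_add_sq v, ?_⟩
  · rw [q_zero]
    exact neg_neg_of_pos (mul_pos (pow_pos h1 6) (by positivity))
  · rw [(hasDerivAt_q v 0).deriv]
    nlinarith [pow_pos h1 4]
  · rw [q_one_add_sq]
    exact mul_pos (mul_pos (by positivity) (pow_pos h1 2)) (by positivity)
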